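/- arXiv:2306.10659 — 2 statements merged into one kernel-verified Lean document; each statement's English description precedes it below -/
import Mathlib

section
/- Let μ ∈ ℝ, σ > 0, λ > 0 with μ + σ²/2 = 0, let K > 0, and let θ₁ = (-μ + √(μ² + 2λσ²))/σ², θ₂ = (-μ - √(μ² + 2λσ²))/σ². Define m(x) = (K/(λ(θ₁-θ₂))) e^{θ₁(x - log K)} - e^x/λ + K/λ for x ≤ log K and m(x) = (K/(λ(θ₁-θ₂))) e^{θ₂(x - log K)} for x > log K. Then m is continuously differentiable on ℝ, and on each of the regions {x < log K} and {x > log K} it satisfies λ m(x) - (K - e^x)⁺ = μ m'(x) + (σ²/2) m''(x). -/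
/-!
Both branches of `m` have the form `A e^{θ(x - b)} + B eˣ + c`. For such a function
`λu - (μu' + (σ²/2)u'') = A (λ - μθ - (σ²/2)θ²) e^{θ(x - b)} - B (μ + σ²/2) eˣ + λc`;
the first coefficient vanishes because `θ₁, θ₂` are the roots of `(σ²/2)θ² + μθ = λ`, and the
second by the martingale condition, so what remains is `K - eˣ` on the left branch and `0` on
the right one. The constant `K / (λ(θ₁ - θ₂))` is the one for which the values and the first
derivatives of the two branches agree at `log K`, which makes `m` a `C¹` function.
-/
open Real Filter Topology Set

section Piecewise

variable {f g : ℝ → ℝ} {b x : ℝ}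

theorem ite_le_eventuallyEq_left (hx : x < b) :
    (fun y => if y ≤ b then f y else g y) =ᶠ[𝓝 x] f := by
  filter_upwards [Iio_mem_nhds hx] with y hy
  exact if_pos (le_of_lt hy)

theorem ite_le_eventuallyEq_right (hx : b < x) :
    (fun y => if y ≤ b then f y else g y) =ᶠ[𝓝 x] g := by
  filter_upwards [Ioi_mem_nhds hx] with y hy
  exact if_neg (not_le.2 hy)

theorem ite_le_eq_right_of_le (h0 : f b = g b) (hx : b ≤ x) :
    (if x ≤ b then f x else g x) = g x := by
  split_ifs with h
  · rw [le_antisymm h hx, h0]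
  · rfl

theorem hasDerivAt_ite_le (hf : Differentiable ℝ f) (hg : Differentiable ℝ g)
    (h0 : f b = g b) (h1 : deriv f b = deriv g b) (x : ℝ) :
    HasDerivAt (fun y => if y ≤ b then f y else g y)
      (if x ≤ b then deriv f x else deriv g x) x := by
  rcases lt_trichotomy x b with hx | rfl | hx
  · rw [if_pos hx.le]
    exact (hf x).hasDerivAt.congr_of_eventuallyEq (ite_le_eventuallyEq_left hx)
  · have hleft : HasDerivWithinAt (fun y => if y ≤ x then f y else g y) (deriv f x) (Iic x) x :=
      (hf x).hasDerivAt.hasDerivWithinAt.congr (fun y hy => if_pos hy) (if_pos le_rfl)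
    have hright : HasDerivWithinAt (fun y => if y ≤ x then f y else g y) (deriv f x) (Ici x) x :=
      h1 ▸ (hg x).hasDerivAt.hasDerivWithinAt.congr (fun y hy => ite_le_eq_right_of_le h0 hy)
        (ite_le_eq_right_of_le h0 le_rfl)
    rw [if_pos le_rfl, ← hasDerivWithinAt_univ, ← Iic_union_Ici]
    exact hleft.union hright
  · rw [if_neg (not_le.2 hx)]
    exact (hg x).hasDerivAt.congr_of_eventuallyEq (ite_le_eventuallyEq_right hx)

theorem contDiff_one_ite_le (hf : ContDiff ℝ 1 f) (hg : ContDiff ℝ 1 g)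
    (h0 : f b = g b) (h1 : deriv f b = deriv g b) :
    ContDiff ℝ 1 (fun y => if y ≤ b then f y else g y) := by
  have hderiv :=
    hasDerivAt_ite_le (hf.differentiable one_ne_zero) (hg.differentiable one_ne_zero) h0 h1
  rw [contDiff_one_iff_deriv, funext fun x => (hderiv x).deriv]
  refine ⟨fun x => (hderiv x).differentiableAt, ?_⟩
  exact Continuous.if_le (hf.continuous_deriv le_rfl) (hg.continuous_deriv le_rfl)
    continuous_id continuous_const fun x hx => hx ▸ h1

end Piecewise

theorem quadratic_eq_of_root {μ σ lam s θ : ℝ} (hσ : σ ≠ 0) (hs : s * s = μ ^ 2 + 2 * lam * σ ^ 2)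
    (hθ : θ = (-μ + s) / σ ^ 2 ∨ θ = (-μ - s) / σ ^ 2) :
    σ ^ 2 / 2 * θ ^ 2 + μ * θ = lam := by
  have hroot := (quadratic_eq_zero_iff (a := σ ^ 2 / 2) (b := μ) (c := -lam) (by positivity)
    (by rw [discrim, hs]; ring) θ).2 (by rwa [mul_div_cancel₀ _ two_ne_zero])
  linear_combination hroot

noncomputable def expComb (A θ b B c : ℝ) (x : ℝ) : ℝ := A * exp (θ * (x - b)) + B * exp x + c

theorem hasDerivAt_expComb (A θ b B c x : ℝ) :
    HasDerivAt (expComb A θ b B c) (expComb (A * θ) θ b B 0 x) x := by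
  have hlin : HasDerivAt (fun y => θ * (y - b)) θ x := by
    simpa using ((hasDerivAt_id x).sub_const b).const_mul θ
  have := ((hlin.exp.const_mul A).add ((hasDerivAt_exp x).const_mul B)).add_const c
  exact this.congr_deriv (by simp only [expComb]; ring)

theorem deriv_expComb (A θ b B c : ℝ) :
    deriv (expComb A θ b B c) = expComb (A * θ) θ b B 0 :=
  funext fun x => (hasDerivAt_expComb A θ b B c x).deriv

theorem contDiff_expComb (A θ b B c : ℝ) : ContDiff ℝ 1 (expComb A θ b B c) := by
  unfold expComb; fun_prop

theorem expComb_ode_residual {μ σ lam θ : ℝ} (hθ : σ ^ 2 / 2 * θ ^ 2 + μ * θ = lam)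
    (hmart : μ + σ ^ 2 / 2 = 0) (A b B c x : ℝ) :
    lam * expComb A θ b B c x - (μ * deriv (expComb A θ b B c) x
      + σ ^ 2 / 2 * deriv (deriv (expComb A θ b B c)) x) = lam * (B * exp x + c) := by
  simp only [deriv_expComb, expComb]
  linear_combination (-(A * exp (θ * (x - b)))) * hθ - (B * exp x) * hmart

/-- The piecewise function `m` (Laplace transform of the put price under BM with drift)
is `C¹` on `ℝ` and satisfies `λm - (K - eˣ)⁺ = μm' + (σ²/2)m''` off `x = log K`. -/
theorem laplace_put_solves_ode (μ σ lam K : ℝ) (hσ : 0 < σ) (hlam : 0 < lam)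
    (hK : 0 < K) (hmart : μ + σ ^ 2 / 2 = 0) :
    let θ₁ : ℝ := (-μ + Real.sqrt (μ ^ 2 + 2 * lam * σ ^ 2)) / σ ^ 2
    let θ₂ : ℝ := (-μ - Real.sqrt (μ ^ 2 + 2 * lam * σ ^ 2)) / σ ^ 2
    let m : ℝ → ℝ := fun x =>
      if x ≤ Real.log K then
        K / (lam * (θ₁ - θ₂)) * Real.exp (θ₁ * (x - Real.log K))
          - Real.exp x / lam + K / lam
      else K / (lam * (θ₁ - θ₂)) * Real.exp (θ₂ * (x - Real.log K))
    ContDiff ℝ 1 m ∧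
      ∀ x : ℝ, x ≠ Real.log K →
        lam * m x - max (K - Real.exp x) 0
          = μ * deriv m x + σ ^ 2 / 2 * deriv (deriv m) x := by
  intro θ₁ θ₂ m
  have hdisc : 0 < μ ^ 2 + 2 * lam * σ ^ 2 := by positivity
  have hs := Real.mul_self_sqrt hdisc.le
  have hθ₁ := quadratic_eq_of_root (θ := θ₁) hσ.ne' hs (.inl rfl)
  have hθ₂ := quadratic_eq_of_root (θ := θ₂) hσ.ne' hs (.inr rfl)
  have hθ : θ₁ - θ₂ ≠ 0 := by
    have : θ₁ - θ₂ = 2 * √(μ ^ 2 + 2 * lam * σ ^ 2) / σ ^ 2 := by ring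
    rw [this]; have := Real.sqrt_pos.2 hdisc; positivity
  set C := K / (lam * (θ₁ - θ₂))
  set F := expComb C θ₁ (log K) (-lam⁻¹) (K / lam)
  set G := expComb C θ₂ (log K) 0 0
  have hm : m = fun x => if x ≤ log K then F x else G x := by
    funext x; simp only [m, F, G, expComb]; split_ifs <;> ring
  refine ⟨hm ▸ contDiff_one_ite_le (contDiff_expComb ..) (contDiff_expComb ..) ?_ ?_,
    fun x hx => ?_⟩
  · simp only [F, G, expComb, sub_self, mul_zero, exp_zero, exp_log hK]; field_simp; ring
  · simp only [F, G, deriv_expComb, expComb, sub_self, mul_zero, exp_zero, exp_log hK, C]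
    field_simp; ring
  rcases hx.lt_or_gt with hlt | hgt
  · have hu : m =ᶠ[𝓝 x] F := hm ▸ ite_le_eventuallyEq_left hlt
    rw [hu.deriv_eq, hu.deriv.deriv_eq, hu.eq_of_nhds,
      max_eq_left (sub_nonneg.2 ((exp_lt_exp.2 hlt).trans_eq (exp_log hK)).le)]
    linear_combination expComb_ode_residual hθ₁ hmart C (log K) (-lam⁻¹) (K / lam) x
      + (K - exp x) * mul_inv_cancel₀ hlam.ne'
  · have hu : m =ᶠ[𝓝 x] G := hm ▸ ite_le_eventuallyEq_right hgt
    rw [hu.deriv_eq, hu.deriv.deriv_eq, hu.eq_of_nhds,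
      max_eq_right (sub_nonpos.2 ((exp_log hK).symm.trans_lt (exp_lt_exp.2 hgt)).le)]
    linear_combination expComb_ode_residual hθ₂ hmart C (log K) 0 0 x
end

section
/- Let u: [0,∞) → ℝ be measurable with 0 ≤ u ≤ K, let m(λ) = ∫_0^∞ u(s) e^{-λs} ds, and let 0 < α < 1. Then the fractional derivative D^α_λ m(λ) = (1/Γ(1-α)) d/dλ ∫_λ^∞ (r-λ)^{-α} m(r) dr equals -∫_0^∞ u(s) s^α e^{-λs} ds for every λ > 0. -/
/-!
Writing `r = l + t`, the kernel integral `∫_l^∞ (r - l)^{-α} e^{-rs} dr` is the Gamma integral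
`Γ(1 - α) s^{α - 1} e^{-ls}`. Since everything is nonnegative, Tonelli lets us integrate the kernel
first, so `∫_l^∞ (r - l)^{-α} m(r) dr = Γ(1 - α) ∫_0^∞ u(s) s^{α - 1} e^{-ls} ds` for `l ≥ 0`.
Differentiating this Laplace transform in `l` under the integral sign (dominated by
`K s^α e^{-λ s / 2}` near `λ`) multiplies the integrand by `-s`, which gives the claim.
-/

open MeasureTheory Real Set Function

section TonelliSwap

variable {X Y : Type*} [MeasurableSpace X] [MeasurableSpace Y] {μ : Measure X} {ν : Measure Y}
  {f : X → Y → ℝ}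

lemma integral_integral_eq_toReal_lintegral_lintegral [SFinite ν] (hf : Measurable (uncurry f))
    (hf_nonneg : ∀ᵐ x ∂μ, ∀ᵐ y ∂ν, 0 ≤ f x y) (hf_int : ∀ᵐ x ∂μ, Integrable (f x) ν) :
    ∫ x, ∫ y, f x y ∂ν ∂μ = (∫⁻ x, ∫⁻ y, ENNReal.ofReal (f x y) ∂ν ∂μ).toReal := by
  have hmeas : Measurable fun x => ∫⁻ y, ENNReal.ofReal (f x y) ∂ν :=
    (ENNReal.measurable_ofReal.comp hf).lintegral_prod_right'
  rw [← integral_toReal hmeas.aemeasurable (hf_int.mono fun x hx => hx.lintegral_lt_top)]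
  refine integral_congr_ae (hf_nonneg.mono fun x hx => ?_)
  exact integral_eq_lintegral_of_nonneg_ae hx (hf.comp measurable_prodMk_left).aestronglyMeasurable

theorem integral_integral_swap_of_nonneg [SFinite μ] [SFinite ν] (hf : Measurable (uncurry f))
    (hf_nonneg : ∀ᵐ x ∂μ, ∀ᵐ y ∂ν, 0 ≤ f x y) (hμ : ∀ᵐ x ∂μ, Integrable (f x) ν)
    (hν : ∀ᵐ y ∂ν, Integrable (fun x => f x y) μ) :
    ∫ x, ∫ y, f x y ∂ν ∂μ = ∫ y, ∫ x, f x y ∂μ ∂ν := by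
  have hf_nonneg' : ∀ᵐ y ∂ν, ∀ᵐ x ∂μ, 0 ≤ f x y :=
    (Measure.ae_ae_comm (p := fun x y => 0 ≤ f x y)
      (measurableSet_le measurable_const hf)).1 hf_nonneg
  rw [integral_integral_eq_toReal_lintegral_lintegral hf hf_nonneg hμ,
    integral_integral_eq_toReal_lintegral_lintegral (f := fun y x => f x y)
      (hf.comp measurable_swap) hf_nonneg' hν,
    lintegral_lintegral_swap (f := fun x y => ENNReal.ofReal (f x y))
      (ENNReal.measurable_ofReal.comp hf).aemeasurable]

end TonelliSwap

section Translation

variable {E : Type*} [NormedAddCommGroup E]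

theorem setIntegral_Ioi_comp_add_right [NormedSpace ℝ E] (f : ℝ → E) (l : ℝ) :
    ∫ t in Ioi 0, f (t + l) = ∫ r in Ioi l, f r := by
  simpa [image_add_const_Ioi] using ((measurePreserving_add_right volume l).setIntegral_image_emb
    (measurableEmbedding_addRight l) f (Ioi 0)).symm

theorem integrableOn_Ioi_comp_add_right_iff (f : ℝ → E) (l : ℝ) :
    IntegrableOn (fun t => f (t + l)) (Ioi 0) ↔ IntegrableOn f (Ioi l) := by
  simpa [image_add_const_Ioi, comp_def] using
    ((measurePreserving_add_right volume l).integrableOn_image (measurableEmbedding_addRight l)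
      (f := f) (s := Ioi 0)).symm

end Translation

lemma integrableOn_rpow_sub_mul_exp_neg_mul {α s : ℝ} (hα : α < 1) (hs : 0 < s) (l : ℝ) :
    IntegrableOn (fun r => (r - l) ^ (-α) * exp (-r * s)) (Ioi l) := by
  rw [← integrableOn_Ioi_comp_add_right_iff]
  refine IntegrableOn.congr_fun ((integrableOn_rpow_mul_exp_neg_mul_rpow (s := -α) (by linarith)
    zero_lt_one hs).const_mul (exp (-l * s))) (fun t _ => ?_) measurableSet_Ioi
  rw [add_sub_cancel_right, rpow_one, show -(t + l) * s = -s * t + -l * s by ring, exp_add]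
  ring

lemma integral_rpow_sub_mul_exp_neg_mul {α s : ℝ} (hα : α < 1) (hs : 0 < s) (l : ℝ) :
    ∫ r in Ioi l, (r - l) ^ (-α) * exp (-r * s) = Gamma (1 - α) * s ^ (α - 1) * exp (-l * s) := by
  have hΓ := integral_rpow_mul_exp_neg_mul_Ioi (a := 1 - α) (by linarith) hs
  rw [← setIntegral_Ioi_comp_add_right]
  calc ∫ t in Ioi 0, (t + l - l) ^ (-α) * exp (-(t + l) * s)
      = ∫ t in Ioi 0, exp (-l * s) * (t ^ (1 - α - 1) * exp (-(s * t))) := by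
        refine integral_congr_ae (ae_of_all _ fun t => ?_)
        dsimp only
        rw [add_sub_cancel_right, sub_sub_cancel_left,
          show -(t + l) * s = -(s * t) + -l * s by ring, exp_add]
        ring
    _ = Gamma (1 - α) * s ^ (α - 1) * exp (-l * s) := by
        rw [integral_const_mul, hΓ, one_div, inv_rpow hs.le, ← rpow_neg hs.le, neg_sub]
        ring

theorem integrableOn_mul_exp_neg_mul_of_norm_le_rpow {f : ℝ → ℝ} {C β b : ℝ}
    (hf : AEStronglyMeasurable f (volume.restrict (Ioi 0))) (hβ : -1 < β)
    (hbound : ∀ s ∈ Ioi (0 : ℝ), ‖f s‖ ≤ C * s ^ β) (hb : 0 < b) :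
    IntegrableOn (fun s => f s * exp (-b * s)) (Ioi 0) := by
  refine ((integrableOn_rpow_mul_exp_neg_mul_rpow hβ zero_lt_one hb).const_mul C).mono'
    (hf.mul (by fun_prop : Continuous fun s : ℝ => exp (-b * s)).aestronglyMeasurable) ?_
  refine ae_restrict_of_forall_mem measurableSet_Ioi fun s hs => ?_
  rw [norm_mul, norm_of_nonneg (exp_pos _).le, rpow_one, ← mul_assoc]
  exact mul_le_mul_of_nonneg_right (hbound s hs) (exp_pos _).le

theorem hasDerivAt_integral_mul_exp_neg_mul {f : ℝ → ℝ} {C β lam : ℝ}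
    (hf : AEStronglyMeasurable f (volume.restrict (Ioi 0))) (hβ : -1 < β)
    (hbound : ∀ s ∈ Ioi (0 : ℝ), ‖f s‖ ≤ C * s ^ β) (hlam : 0 < lam) :
    HasDerivAt (fun l => ∫ s in Ioi 0, f s * exp (-l * s))
      (∫ s in Ioi 0, -(s * f s * exp (-lam * s))) lam := by
  have hsf : AEStronglyMeasurable (fun s => s * f s) (volume.restrict (Ioi 0)) :=
    continuous_id.aestronglyMeasurable.mul hf
  have hsf_bound : ∀ s ∈ Ioi (0 : ℝ), ‖s * f s‖ ≤ C * s ^ (β + 1) := fun s hs => by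
    rw [norm_mul, norm_of_nonneg (le_of_lt hs), rpow_add_one (ne_of_gt hs)]
    nlinarith [hbound s hs, mem_Ioi.1 hs]
  have hdom := integrableOn_mul_exp_neg_mul_of_norm_le_rpow hsf (by linarith) hsf_bound
    (half_pos hlam)
  refine (hasDerivAt_integral_of_dominated_loc_of_deriv_le
    (F := fun l s => f s * exp (-l * s)) (F' := fun l s => -(s * f s * exp (-l * s)))
    (bound := fun s => ‖s * f s * exp (-(lam / 2) * s)‖) (Metric.ball_mem_nhds lam (half_pos hlam))
    (Filter.Eventually.of_forall fun l =>
      hf.mul (by fun_prop : Continuous fun s : ℝ => exp (-l * s)).aestronglyMeasurable)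
    (integrableOn_mul_exp_neg_mul_of_norm_le_rpow hf hβ hbound hlam)
    (hsf.mul (by fun_prop : Continuous fun s : ℝ => exp (-lam * s)).aestronglyMeasurable).neg
    ?_ hdom.norm (ae_of_all _ fun s l _ => ?_)).2
  · refine ae_restrict_of_forall_mem measurableSet_Ioi fun s hs l hl => ?_
    have hl : lam / 2 < l := by
      have := abs_sub_lt_iff.1 (Metric.mem_ball.1 hl); linarith
    rw [norm_neg, norm_mul, norm_mul (s * f s), norm_of_nonneg (exp_pos _).le,
      norm_of_nonneg (exp_pos _).le]
    gcongr
    nlinarith [mem_Ioi.1 hs]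
  · exact (((hasDerivAt_neg l).mul_const s).exp.const_mul (f s)).congr_deriv (by ring)

theorem integral_rpow_sub_mul_integral_mul_exp_neg_mul {u : ℝ → ℝ} {K α l : ℝ}
    (hu : Measurable u) (hu_nonneg : ∀ s, 0 ≤ u s) (hu_le : ∀ s, u s ≤ K) (hα : α < 1)
    (hl : 0 ≤ l) :
    ∫ r in Ioi l, (r - l) ^ (-α) * ∫ s in Ioi 0, u s * exp (-r * s)
      = Gamma (1 - α) * ∫ s in Ioi 0, u s * s ^ (α - 1) * exp (-l * s) := by
  have hu_laplace : ∀ r ∈ Ioi l, IntegrableOn (fun s => u s * exp (-r * s)) (Ioi 0) :=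
    fun r hr => integrableOn_mul_exp_neg_mul_of_norm_le_rpow (C := K) (β := 0)
      hu.aestronglyMeasurable (by norm_num)
      (fun s _ => by simpa [abs_of_nonneg (hu_nonneg s)] using hu_le s)
      (hl.trans_lt hr)
  calc ∫ r in Ioi l, (r - l) ^ (-α) * ∫ s in Ioi 0, u s * exp (-r * s)
      = ∫ r in Ioi l, ∫ s in Ioi 0, (r - l) ^ (-α) * (u s * exp (-r * s)) := by
        simp only [integral_const_mul]
    _ = ∫ s in Ioi 0, ∫ r in Ioi l, (r - l) ^ (-α) * (u s * exp (-r * s)) := by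
        refine integral_integral_swap_of_nonneg (by fun_prop) ?_ ?_ ?_
        · refine ae_restrict_of_forall_mem measurableSet_Ioi fun r hr => ae_of_all _ fun s => ?_
          exact mul_nonneg (rpow_nonneg (sub_nonneg.2 (le_of_lt hr)) _)
            (mul_nonneg (hu_nonneg s) (exp_pos _).le)
        · exact ae_restrict_of_forall_mem measurableSet_Ioi fun r hr =>
            (hu_laplace r hr).const_mul _
        · refine ae_restrict_of_forall_mem measurableSet_Ioi fun s hs => ?_
          simpa only [mul_left_comm _ (u s)] using
            (integrableOn_rpow_sub_mul_exp_neg_mul hα hs l).const_mul (u s)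
    _ = ∫ s in Ioi 0, Gamma (1 - α) * (u s * s ^ (α - 1) * exp (-l * s)) := by
        refine setIntegral_congr_fun measurableSet_Ioi fun s hs => ?_
        simp only [mul_left_comm _ (u s)]
        rw [integral_const_mul, integral_rpow_sub_mul_exp_neg_mul hα hs]
        ring
    _ = Gamma (1 - α) * ∫ s in Ioi 0, u s * s ^ (α - 1) * exp (-l * s) := integral_const_mul _ _

theorem frac_deriv_laplace_general (K α : ℝ) (hα₀ : 0 < α) (hα₁ : α < 1)
    (u : ℝ → ℝ) (hmeas : Measurable u) (hbdd : ∀ s : ℝ, u s ∈ Icc 0 K) :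
    let m : ℝ → ℝ := fun lam => ∫ s in Ioi 0, u s * Real.exp (-lam * s)
    ∀ lam : ℝ, 0 < lam →
      (1 / Real.Gamma (1 - α)) *
          deriv (fun l : ℝ => ∫ r in Ioi l, (r - l) ^ (-α) * m r) lam
        = -∫ s in Ioi 0, u s * s ^ α * Real.exp (-lam * s) := by
  intro m lam hlam
  have hΓ : Gamma (1 - α) ≠ 0 := (Gamma_pos_of_pos (by linarith)).ne'
  have hfubini : (fun l => ∫ r in Ioi l, (r - l) ^ (-α) * m r)
      =ᶠ[nhds lam] fun l => Gamma (1 - α) * ∫ s in Ioi 0, u s * s ^ (α - 1) * exp (-l * s) :=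
    Filter.eventually_of_mem (Ioi_mem_nhds hlam) fun l hl =>
      integral_rpow_sub_mul_integral_mul_exp_neg_mul hmeas (fun s => (hbdd s).1)
        (fun s => (hbdd s).2) hα₁ (le_of_lt hl)
  have hbound : ∀ s ∈ Ioi (0 : ℝ), ‖u s * s ^ (α - 1)‖ ≤ K * s ^ (α - 1) := fun s hs => by
    rw [norm_mul, norm_of_nonneg (hbdd s).1, norm_of_nonneg (rpow_nonneg (le_of_lt hs) _)]
    exact mul_le_mul_of_nonneg_right (hbdd s).2 (rpow_nonneg (le_of_lt hs) _)
  have hderiv := hasDerivAt_integral_mul_exp_neg_mul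
    (by fun_prop : Measurable fun s => u s * s ^ (α - 1)).aestronglyMeasurable (by linarith)
    hbound hlam
  have hweight : ∀ s ∈ Ioi (0 : ℝ), -(s * (u s * s ^ (α - 1)) * exp (-lam * s))
      = -(u s * s ^ α * exp (-lam * s)) := fun s hs => by
    rw [show s * (u s * s ^ (α - 1)) = u s * (s ^ (α - 1) * s) by ring,
      ← rpow_add_one (ne_of_gt hs), sub_add_cancel]
  rw [hfubini.deriv_eq, (hderiv.const_mul _).deriv, setIntegral_congr_fun measurableSet_Ioi hweight,
    integral_neg]
  field_simp

/-- Fractional derivative of the Laplace transform: for `0 < α < 1` and `0 ≤ u ≤ K`,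
`D^α_λ m(λ) = -∫_0^∞ u(s) s^α e^{-λs} ds` for every `λ > 0`, where
`D^α_λ f λ = (1/Γ(1-α)) d/dλ ∫_λ^∞ (r-λ)^{-α} f(r) dr`. -/
theorem frac_deriv_laplace (K α : ℝ) (hK : 0 < K) (hα₀ : 0 < α) (hα₁ : α < 1)
    (u : ℝ → ℝ) (hmeas : Measurable u) (hbdd : ∀ s : ℝ, u s ∈ Icc 0 K) :
    let m : ℝ → ℝ := fun lam => ∫ s in Ioi 0, u s * Real.exp (-lam * s)
    ∀ lam : ℝ, 0 < lam →
      (1 / Real.Gamma (1 - α)) *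
          deriv (fun l : ℝ => ∫ r in Ioi l, (r - l) ^ (-α) * m r) lam
        = -∫ s in Ioi 0, u s * s ^ α * Real.exp (-lam * s) :=
  frac_deriv_laplace_general K α hα₀ hα₁ u hmeas hbdd
end
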